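/- Let K be an N×N Hermitian contracting matrix with strictly positive diagonal entries, P a determinantal sampling design with kernel K, y = (y_1,…,y_N) a real vector and w = (w_1,…,w_N) a real vector with w_k ≠ 0 for all k. Set t_y = ∑_{k∈U} y_k and t̂_{yw}(s) = ∑_{k∈s} w_k y_k. Then the mean square error satisfies the bound ∑_{s ⊆ U} P(s)·(t̂_{yw}(s) − t_y)² ≤ (1 + ∑_{k=1}^N K_{kk}(1 − 1/(K_{kk} w_k))²) · (∑_{k=1}^N K_{kk}(w_k y_k)²). In particular, for the Horvitz–Thompson weights w_k = 1/K_{kk}, the variance is bounded by ∑_{k=1}^N y_k² / K_{kk}. -/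

import Mathlib

/-!
Under a determinantal design the first- and second-order inclusion probabilities are
`π_k = K_kk` and `π_kl = K_kk K_ll - |K_kl|²` (`k ≠ l`). Expanding the square, the mean square
error of `∑_{k ∈ s} a_k` as an estimator of `t` is therefore
`(∑ π_k a_k - t)² + ∑ π_k a_k² - ∑_{k,l} a_k a_l |K_kl|²`.
The last sum is the quadratic form of the Schur product `K ⊙ Kᵀ` at `a`, hence nonnegative
when `K` is positive semidefinite, and the bias `∑ π_k a_k - t` is bounded by a weighted
Cauchy–Schwarz inequality. For the Horvitz–Thompson weights the bias vanishes.
-/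

/-- `P` is a determinantal sampling design with kernel `K`:
for every `s ⊆ U`, `∑_{s' ⊇ s} P(s') = det(K_{|s})`. -/
def IsDSD {N : ℕ} (P : Finset (Fin N) → ℝ) (K : Matrix (Fin N) (Fin N) ℂ) : Prop :=
  ∀ s : Finset (Fin N),
    ((∑ s' ∈ Finset.univ.filter (fun s' => s ⊆ s'), P s' : ℝ) : ℂ) =
      (K.submatrix (fun i : {x // x ∈ s} => i.1) (fun j : {x // x ∈ s} => j.1)).det

open Finset ComplexOrder

namespace Matrix

section Det

variable {ι R : Type*} [DecidableEq ι] [CommRing R]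

theorem det_submatrix_singleton (A : Matrix ι ι R) (k : ι) :
    (A.submatrix (fun i : {x // x ∈ ({k} : Finset ι)} => i.1) (fun j => j.1)).det = A k k :=
  det_unique _

theorem det_submatrix_pair (A : Matrix ι ι R) {k l : ι} (hkl : k ≠ l) :
    (A.submatrix (fun i : {x // x ∈ ({k, l} : Finset ι)} => i.1) (fun j => j.1)).det =
      A k k * A l l - A k l * A l k := by
  let v : Fin 2 → {x // x ∈ ({k, l} : Finset ι)} := ![⟨k, by simp⟩, ⟨l, by simp⟩]
  have hv : Function.Injective v := by
    intro i j h
    fin_cases i <;> fin_cases j <;> simp_all [v, Subtype.ext_iff, hkl.symm]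
  have hcard : Fintype.card (Fin 2) = Fintype.card {x // x ∈ ({k, l} : Finset ι)} := by
    rw [Fintype.card_fin, Fintype.card_coe, card_pair hkl]
  let e := Equiv.ofBijective v ((Fintype.bijective_iff_injective_and_card v).2 ⟨hv, hcard⟩)
  rw [← det_submatrix_equiv_self e, det_fin_two]
  rfl

end Det

theorem PosSemidef.sum_mul_normSq_nonneg {ι : Type*} [Fintype ι] {K : Matrix ι ι ℂ}
    (hK : K.PosSemidef) (a : ι → ℝ) :
    0 ≤ ∑ k, ∑ l, a k * a l * Complex.normSq (K k l) := by
  have h := (hK.hadamard hK.transpose).dotProduct_mulVec_nonneg (fun k => (a k : ℂ))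
  simp only [dotProduct, mulVec, hadamard_apply, transpose_apply, mul_sum, Pi.star_apply,
    Complex.star_def, Complex.conj_ofReal] at h
  have hsum : ((∑ k, ∑ l, a k * a l * Complex.normSq (K k l) : ℝ) : ℂ) =
      ∑ k, ∑ l, (a k : ℂ) * (K k l * K l k * a l) := by
    push_cast
    refine sum_congr rfl fun k _ => sum_congr rfl fun l _ => ?_
    rw [← hK.isHermitian.apply l k, Complex.star_def, Complex.mul_conj]
    ring
  exact Complex.zero_le_real.mp (hsum ▸ h)

end Matrix

section InclusionProb

variable {ι : Type*} [Fintype ι] [DecidableEq ι]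

def inclusionProb (P : Finset ι → ℝ) (s : Finset ι) : ℝ :=
  ∑ s' ∈ univ.filter (fun s' => s ⊆ s'), P s'

theorem sum_mul_sum_mem_eq_sum_inclusionProb (P : Finset ι → ℝ) (a : ι → ℝ) :
    ∑ s, P s * ∑ k ∈ s, a k = ∑ k, a k * inclusionProb P {k} := by
  simp_rw [inclusionProb, mul_sum, mul_comm (P _)]
  exact sum_comm' fun s k => by simp

theorem sum_mul_sum_mem_sq_eq_sum_inclusionProb (P : Finset ι → ℝ) (a : ι → ℝ) :
    ∑ s, P s * (∑ k ∈ s, a k) ^ 2 = ∑ k, ∑ l, a k * a l * inclusionProb P {k, l} := by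
  simp_rw [inclusionProb, sq, sum_mul_sum, mul_sum, mul_comm (P _)]
  rw [sum_comm' (t' := univ) (s' := fun k => univ.filter (fun s => k ∈ s)) fun s k => by simp]
  exact sum_congr rfl fun k _ => sum_comm' fun s l => by simp [insert_subset_iff]

theorem sum_mul_sum_mem_sub_sq_eq {P : Finset ι → ℝ} (hP : ∑ s, P s = 1) (a : ι → ℝ) (t : ℝ) :
    ∑ s, P s * (∑ k ∈ s, a k - t) ^ 2 =
      ∑ k, ∑ l, a k * a l * inclusionProb P {k, l}
        - 2 * t * ∑ k, a k * inclusionProb P {k} + t ^ 2 := by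
  rw [← sum_mul_sum_mem_sq_eq_sum_inclusionProb, ← sum_mul_sum_mem_eq_sum_inclusionProb,
    mul_sum, ← mul_one (t ^ 2), ← hP, mul_sum, ← sum_sub_distrib, ← sum_add_distrib]
  exact sum_congr rfl fun s _ => by ring

end InclusionProb

namespace IsDSD

variable {N : ℕ} {P : Finset (Fin N) → ℝ} {K : Matrix (Fin N) (Fin N) ℂ}

theorem ofReal_inclusionProb_singleton (hP : IsDSD P K) (k : Fin N) :
    (inclusionProb P {k} : ℂ) = K k k :=
  (hP {k}).trans (K.det_submatrix_singleton k)

theorem inclusionProb_singleton (hP : IsDSD P K) (k : Fin N) :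
    inclusionProb P {k} = (K k k).re := by
  rw [← hP.ofReal_inclusionProb_singleton, Complex.ofReal_re]

theorem ofReal_re_diag (hP : IsDSD P K) (k : Fin N) : ((K k k).re : ℂ) = K k k := by
  rw [← hP.inclusionProb_singleton, hP.ofReal_inclusionProb_singleton]

theorem inclusionProb_pair (hP : IsDSD P K) (hK : K.IsHermitian) (k l : Fin N) :
    inclusionProb P {k, l} =
      (K k k).re * (K l l).re - Complex.normSq (K k l) + if k = l then (K k k).re else 0 := by
  rcases eq_or_ne k l with rfl | hkl
  · rw [pair_eq_singleton, if_pos rfl, ← hP.ofReal_re_diag k, Complex.normSq_ofReal,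
      Complex.ofReal_re, hP.inclusionProb_singleton]
    ring
  · have h := (hP {k, l}).trans (K.det_submatrix_pair hkl)
    rw [← hP.ofReal_re_diag k, ← hP.ofReal_re_diag l, ← hK.apply l k, Complex.star_def,
      Complex.mul_conj] at h
    rw [if_neg hkl, add_zero]
    exact_mod_cast h

theorem mse_eq (hP : IsDSD P K) (hK : K.IsHermitian) (hsum : ∑ s, P s = 1)
    (a : Fin N → ℝ) (t : ℝ) :
    ∑ s, P s * (∑ k ∈ s, a k - t) ^ 2 =
      (∑ k, (K k k).re * a k - t) ^ 2 + ∑ k, (K k k).re * a k ^ 2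
        - ∑ k, ∑ l, a k * a l * Complex.normSq (K k l) := by
  have hsq : ∑ k, ∑ l, a k * a l * ((K k k).re * (K l l).re) = (∑ k, (K k k).re * a k) ^ 2 := by
    rw [sq, sum_mul_sum]
    exact sum_congr rfl fun k _ => sum_congr rfl fun l _ => by ring
  simp_rw [sum_mul_sum_mem_sub_sq_eq hsum, hP.inclusionProb_pair hK, hP.inclusionProb_singleton,
    mul_add, mul_sub, sum_add_distrib, sum_sub_distrib, mul_ite, mul_zero, sum_ite_eq,
    mem_univ, if_true, hsq]
  have hlin : ∑ k, a k * (K k k).re = ∑ k, (K k k).re * a k :=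
    sum_congr rfl fun k _ => mul_comm _ _
  have hquad : ∑ k, a k * a k * (K k k).re = ∑ k, (K k k).re * a k ^ 2 :=
    sum_congr rfl fun k _ => by ring
  rw [hlin, hquad]
  ring

theorem mse_le (hP : IsDSD P K) (hK : K.PosSemidef) (hsum : ∑ s, P s = 1)
    (hdiag : ∀ k, 0 < (K k k).re) (y w : Fin N → ℝ) (hw : ∀ k, w k ≠ 0) :
    ∑ s, P s * (∑ k ∈ s, w k * y k - ∑ k, y k) ^ 2 ≤
      (1 + ∑ k, (K k k).re * (1 - 1 / ((K k k).re * w k)) ^ 2) *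
        ∑ k, (K k k).re * (w k * y k) ^ 2 := by
  have hbias : ∑ k, (K k k).re * (w k * y k) - ∑ k, y k =
      ∑ k, (K k k).re * (1 - 1 / ((K k k).re * w k)) * (w k * y k) := by
    rw [← sum_sub_distrib]
    refine sum_congr rfl fun k _ => ?_
    field_simp [(hdiag k).ne', hw k]
  have hbias_sq := sum_sq_le_sum_mul_sum_of_sq_le_mul univ
    (r := fun k => (K k k).re * (1 - 1 / ((K k k).re * w k)) * (w k * y k))
    (f := fun k => (K k k).re * (1 - 1 / ((K k k).re * w k)) ^ 2)
    (g := fun k => (K k k).re * (w k * y k) ^ 2)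
    (fun k _ => mul_nonneg (hdiag k).le (sq_nonneg _))
    (fun k _ => mul_nonneg (hdiag k).le (sq_nonneg _)) (fun k _ => le_of_eq (by ring))
  rw [hP.mse_eq hK.isHermitian hsum, hbias]
  nlinarith [hK.sum_mul_normSq_nonneg fun k => w k * y k]

theorem horvitzThompson_mse_le (hP : IsDSD P K) (hK : K.PosSemidef) (hsum : ∑ s, P s = 1)
    (hdiag : ∀ k, 0 < (K k k).re) (y : Fin N → ℝ) :
    ∑ s, P s * (∑ k ∈ s, y k / (K k k).re - ∑ k, y k) ^ 2 ≤ ∑ k, y k ^ 2 / (K k k).re := by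
  have hmean : ∑ k, (K k k).re * (y k / (K k k).re) = ∑ k, y k :=
    sum_congr rfl fun k _ => mul_div_cancel₀ _ (hdiag k).ne'
  have hvar : ∑ k, (K k k).re * (y k / (K k k).re) ^ 2 = ∑ k, y k ^ 2 / (K k k).re :=
    sum_congr rfl fun k _ => by field_simp [(hdiag k).ne']
  rw [hP.mse_eq hK.isHermitian hsum, hmean, hvar, sub_self, sq, zero_mul, zero_add]
  linarith [hK.sum_mul_normSq_nonneg fun k => y k / (K k k).re]

end IsDSD

theorem mse_bound_general {N : ℕ} (K : Matrix (Fin N) (Fin N) ℂ) (hK : K.IsHermitian)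
    (hcontr : ∀ i, hK.eigenvalues i ∈ Set.Icc (0 : ℝ) 1)
    (hdiag : ∀ k, 0 < (K k k).re)
    (P : Finset (Fin N) → ℝ) (hsum : ∑ s, P s = 1)
    (hDSD : IsDSD P K) (y w : Fin N → ℝ) (hw : ∀ k, w k ≠ 0) :
    (∑ s : Finset (Fin N), P s * ((∑ k ∈ s, w k * y k) - ∑ k, y k) ^ 2) ≤
      (1 + ∑ k, (K k k).re * (1 - 1 / ((K k k).re * w k)) ^ 2) *
        (∑ k, (K k k).re * (w k * y k) ^ 2) ∧
    (∑ s : Finset (Fin N), P s * ((∑ k ∈ s, y k / (K k k).re) - ∑ k, y k) ^ 2) ≤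
      ∑ k, y k ^ 2 / (K k k).re := by
  have hpsd : K.PosSemidef := hK.posSemidef_iff_eigenvalues_nonneg.mpr fun i => (hcontr i).1
  exact ⟨hDSD.mse_le hpsd hsum hdiag y w hw, hDSD.horvitzThompson_mse_le hpsd hsum hdiag y⟩

/-- **MSE bound for a homogeneous linear estimator under a determinantal sampling
design**, and its specialization to the Horvitz–Thompson weights `w_k = 1/K_{kk}`. -/
theorem mse_bound {N : ℕ} (K : Matrix (Fin N) (Fin N) ℂ) (hK : K.IsHermitian)
    (hcontr : ∀ i, hK.eigenvalues i ∈ Set.Icc (0 : ℝ) 1)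
    (hdiag : ∀ k, 0 < (K k k).re)
    (P : Finset (Fin N) → ℝ) (hpos : ∀ s, 0 ≤ P s) (hsum : ∑ s, P s = 1)
    (hDSD : IsDSD P K) (y w : Fin N → ℝ) (hw : ∀ k, w k ≠ 0) :
    (∑ s : Finset (Fin N), P s * ((∑ k ∈ s, w k * y k) - ∑ k, y k) ^ 2) ≤
      (1 + ∑ k, (K k k).re * (1 - 1 / ((K k k).re * w k)) ^ 2) *
        (∑ k, (K k k).re * (w k * y k) ^ 2) ∧
    (∑ s : Finset (Fin N), P s * ((∑ k ∈ s, y k / (K k k).re) - ∑ k, y k) ^ 2) ≤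
      ∑ k, y k ^ 2 / (K k k).re :=
  mse_bound_general K hK hcontr hdiag P hsum hDSD y w hw
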